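/- With n = 4 and (a_1, a_2, a_3, a_4) = (2, 3, 4, 2), the following identity holds in K = ℚ(y_1, …, y_{10}): (∏_{j=1}^{10} y_j) · N[𝓛_1, 𝓛_2, 𝓛_3, 𝓛_4] = (1 + y_1)(1 + y_4 + y_3 y_4)(1 + y_6 + y_6 y_7 + y_6 y_7 y_8)(1 + y_{10}) y_5 + (1 + y_1)(1 + y_4 + y_3 y_4) y_5 y_6 y_7 y_8 y_9 y_{10} + (1 + y_1)(1 + y_{10}) + (1 + y_6 + y_6 y_7 + y_6 y_7 y_8)(1 + y_{10}) y_1 y_2 y_3 y_4 y_5 + y_1 y_2 y_3 y_4 y_5 y_6 y_7 y_8 y_9 y_{10}. -/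
import Mathlib


open MvPolynomial Finset

/-- The ambient field `K = ℚ(y_1, y_2, …)` (only `y_1,…,y_d` are used). -/
abbrev Kf : Type := FractionRing (MvPolynomial ℕ ℚ)

/-- The variable `y_j`, viewed in the fraction field. -/
noncomputable def y (j : ℕ) : Kf := algebraMap (MvPolynomial ℕ ℚ) Kf (X j)

/-- Partial sums `ℓ_i = a_1 + ⋯ + a_i`, with `ℓ_0 = 0`. -/
def ell (a : ℕ → ℕ) (i : ℕ) : ℕ := ∑ s ∈ Finset.Icc 1 i, a s

/-- `φ_i`. -/
noncomputable def phi (a : ℕ → ℕ) (i : ℕ) : Kf :=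
  if Odd i then
    ∑ k ∈ Finset.Icc (ell a (i-1)) (ell a i - 1), ∏ j ∈ Finset.Icc (ell a (i-1) + 1) k, y j
  else
    ∑ k ∈ Finset.Icc (ell a (i-1) + 1) (ell a i), ∏ j ∈ Finset.Icc k (ell a i - 1), y j

/-- `C_i`. -/
noncomputable def Cc (a : ℕ → ℕ) (i : ℕ) : Kf :=
  if Odd i then ∏ j ∈ Finset.Icc 1 (ell a (i-1)), y j
  else ∏ j ∈ Finset.Icc 1 (ell a i - 1), (y j)⁻¹

/-- `𝓛_i = φ_i C_i`. -/
noncomputable def Lr (a : ℕ → ℕ) (i : ℕ) : Kf := phi a i * Cc a i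

/-- The continuant `N[b_1,…,b_m]`. -/
def contN {R : Type*} [CommSemiring R] (b : ℕ → R) : ℕ → R
  | 0 => 1
  | 1 => b 1
  | (m+2) => b (m+2) * contN b (m+1) + contN b m

/-- The F-polynomials `F_m = F(𝒢[a_1,…,a_m])`. -/
noncomputable def F (a : ℕ → ℕ) : ℕ → Kf
  | 0 => 1
  | 1 => phi a 1
  | 2 => phi a 1 * phi a 2 + ∏ j ∈ Finset.Icc 1 (ell a 2 - 1), y j
  | (m+3) =>
    if Odd (m+3) then
      y (ell a (m+2)) * phi a (m+3) * F a (m+2) + F a (m+1)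
    else
      phi a (m+3) * F a (m+2) + (∏ j ∈ Finset.Icc (ell a (m+1)) (ell a (m+3) - 1), y j) * F a (m+1)

/-- The sequence `(a_1, a_2, a_3, a_4) = (2, 3, 4, 2)` (other values irrelevant). -/
def a2342 : ℕ → ℕ :=
  fun i => if i = 1 then 2 else if i = 2 then 3 else if i = 3 then 4 else if i = 4 then 2 else 0

lemma hy (j : ℕ) : y j ≠ 0 := by
  simpa [y] using
    (map_ne_zero_iff (algebraMap (MvPolynomial ℕ ℚ) Kf)
      (IsFractionRing.injective _ _)).mpr (MvPolynomial.X_ne_zero j)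

lemma phi1 : phi a2342 1 = 1 + y 1 := by
  have h : ell a2342 0 = 0 := rfl
  have h1 : ell a2342 1 = 2 := rfl
  rw [phi, if_pos (by decide), h, h1]
  norm_num [Nat.Icc_eq_range', List.range', mul_inv_rev]

lemma phi2 : phi a2342 2 = 1 + y 4 + y 3 * y 4 := by
  have h1 : ell a2342 1 = 2 := rfl
  have h2 : ell a2342 2 = 5 := rfl
  rw [phi, if_neg (by decide), h1, h2]
  norm_num [Nat.Icc_eq_range', List.range', mul_inv_rev]
  ring

lemma phi3 : phi a2342 3 = 1 + y 6 + y 6 * y 7 + y 6 * y 7 * y 8 := by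
  have h2 : ell a2342 2 = 5 := rfl
  have h3 : ell a2342 3 = 9 := rfl
  rw [phi, if_pos (by decide), h2, h3]
  norm_num [Nat.Icc_eq_range', List.range', mul_inv_rev]
  ring

lemma phi4 : phi a2342 4 = 1 + y 10 := by
  have h3 : ell a2342 3 = 9 := rfl
  have h4 : ell a2342 4 = 11 := rfl
  rw [phi, if_neg (by decide), h3, h4]
  norm_num [Nat.Icc_eq_range', List.range', mul_inv_rev]
  ring

lemma Cc1 : Cc a2342 1 = 1 := by
  have h : ell a2342 0 = 0 := rfl
  rw [Cc, if_pos (by decide), h]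
  simp

lemma Cc2 : Cc a2342 2 = (y 1)⁻¹ * (y 2)⁻¹ * (y 3)⁻¹ * (y 4)⁻¹ := by
  have h2 : ell a2342 2 = 5 := rfl
  rw [Cc, if_neg (by decide), h2]
  norm_num [Nat.Icc_eq_range', List.range', mul_inv_rev]
  ring

lemma Cc3 : Cc a2342 3 = y 1 * y 2 * y 3 * y 4 * y 5 := by
  have h2 : ell a2342 2 = 5 := rfl
  rw [Cc, if_pos (by decide), h2]
  norm_num [Nat.Icc_eq_range', List.range', mul_inv_rev]
  ring

lemma Cc4 : Cc a2342 4 = (y 1)⁻¹ * (y 2)⁻¹ * (y 3)⁻¹ * (y 4)⁻¹ * (y 5)⁻¹ * (y 6)⁻¹ * (y 7)⁻¹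
    * (y 8)⁻¹ * (y 9)⁻¹ * (y 10)⁻¹ := by
  have h4 : ell a2342 4 = 11 := rfl
  rw [Cc, if_neg (by decide), h4]
  norm_num [Nat.Icc_eq_range', List.range', mul_inv_rev]
  ring

lemma prod10 : (∏ j ∈ Finset.Icc 1 10, y j) =
    y 1 * y 2 * y 3 * y 4 * y 5 * y 6 * y 7 * y 8 * y 9 * y 10 := by
  norm_num [Nat.Icc_eq_range', List.range', mul_inv_rev]
  ring

set_option maxHeartbeats 2000000 in
/-- Example `[2,3,4,2]`: `C_4⁻¹ ⬝ N[𝓛_1,𝓛_2,𝓛_3,𝓛_4]`, where `C_4⁻¹ = ∏_{j=1}^{10} y_j`, is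
the F-polynomial of `𝒢[2,3,4,2]`, given explicitly. -/
theorem example_2342 :
    (∏ j ∈ Finset.Icc 1 10, y j) * contN (Lr a2342) 4 =
      (1 + y 1) * (1 + y 4 + y 3 * y 4) * (1 + y 6 + y 6 * y 7 + y 6 * y 7 * y 8)
          * (1 + y 10) * y 5
        + (1 + y 1) * (1 + y 4 + y 3 * y 4) * (y 5 * y 6 * y 7 * y 8 * y 9 * y 10)
        + (1 + y 1) * (1 + y 10)
        + (1 + y 6 + y 6 * y 7 + y 6 * y 7 * y 8) * (1 + y 10)
          * (y 1 * y 2 * y 3 * y 4 * y 5)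
        + y 1 * y 2 * y 3 * y 4 * y 5 * y 6 * y 7 * y 8 * y 9 * y 10 := by
  have e4 : contN (Lr a2342) 4 = Lr a2342 4 * (Lr a2342 3 * (Lr a2342 2 * Lr a2342 1 + 1)
      + Lr a2342 1) + (Lr a2342 2 * Lr a2342 1 + 1) := by
    simp [contN]
  rw [e4, prod10]
  simp only [Lr, phi1, phi2, phi3, phi4, Cc1, Cc2, Cc3, Cc4]
  have hP : y 1 * y 2 * y 3 * y 4 * y 5 * y 6 * y 7 * y 8 * y 9 * y 10 ≠ 0 := by
    repeat refine mul_ne_zero ?_ (hy _)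
    exact hy 1
  have hC : y 1 * y 2 * y 3 * y 4 ≠ 0 := by
    repeat refine mul_ne_zero ?_ (hy _)
    exact hy 1
  field_simp [hy 1, hy 2, hy 3, hy 4, hy 5, hy 6, hy 7, hy 8, hy 9, hy 10]
  ring
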